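/- arXiv:2406.17989 — 3 statements merged into one kernel-verified Lean document; each statement's English description precedes it below -/
import Mathlib

section
/- Every p-junta f : {-1,1}^n → {-1,1} (a function depending on at most p of the n input coordinates) can be written as f(x) = Σ_{j=1}^{2^p} u_j · ReLU(⟨w_j, x⟩ - p + 1), where each ‖w_j‖₂ ≤ √p, each |u_j| ≤ 1, and for every x ∈ {-1,1}^n at most one term has ⟨w_j, x⟩ - p + 1 > 0. -/
open Finset

noncomputable def pm (b : Bool) : ℝ := if b then 1 else -1

lemma pm_mul (a b : Bool) : pm a * pm b = 1 - (if b = a then (0:ℝ) else 2) := by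
  cases a <;> cases b <;> norm_num [pm]

/-- Every `p`-junta `f : {-1,1}^n → {-1,1}` can be written as a `1`-sparsely
activated ReLU network with `2^p` neurons: `f(x) = Σ_j u_j ReLU(⟨w_j,x⟩ - p + 1)`
with `|u_j| ≤ 1`, `‖w_j‖₂ ≤ √p`, and at most one active neuron on every input. -/
theorem junta_is_one_sparse_network {n p : ℕ} (hpn : p ≤ n)
    (f : (Fin n → Bool) → ℝ) (hval : ∀ x, f x = 1 ∨ f x = -1)
    (J : Finset (Fin n)) (hJ : J.card ≤ p)
    (hjunta : ∀ x y : Fin n → Bool, (∀ i ∈ J, x i = y i) → f x = f y) :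
    ∃ (u : Fin (2 ^ p) → ℝ) (w : Fin (2 ^ p) → Fin n → ℝ),
      (∀ j, |u j| ≤ 1) ∧
      (∀ j, Real.sqrt (∑ i, w j i ^ 2) ≤ Real.sqrt p) ∧
      (∀ x : Fin n → Bool,
        f x = ∑ j, u j * max (∑ i, w j i * pm (x i) - p + 1) 0) ∧
      (∀ x : Fin n → Bool,
        (univ.filter (fun j => 0 < ∑ i, w j i * pm (x i) - p + 1)).card ≤ 1) := by
  obtain ⟨K, hJK, hK⟩ := Finset.exists_superset_card_eq hJ (by simpa using hpn)
  have hcard : Fintype.card (↥K → Bool) = 2 ^ p := by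
    simp [hK]
  let e : Fin (2 ^ p) ≃ (↥K → Bool) := (Fintype.equivFinOfCardEq hcard).symm
  let x₀ : Fin (2 ^ p) → Fin n → Bool := fun j i => if h : i ∈ K then e j ⟨i, h⟩ else false
  let u : Fin (2 ^ p) → ℝ := fun j => f (x₀ j)
  let w : Fin (2 ^ p) → Fin n → ℝ := fun j i => if h : i ∈ K then pm (e j ⟨i, h⟩) else 0
  -- inner product computation
  have hsum : ∀ (j : Fin (2 ^ p)) (x : Fin n → Bool),
      ∑ i, w j i * pm (x i) - p + 1
        = 1 - 2 * ((univ.filter (fun i : ↥K => ¬ x i = e j i)).card : ℝ) := by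
    intro j x
    have h1 : ∑ i, w j i * pm (x i) = ∑ i : ↥K, pm (e j i) * pm (x i) := by
      rw [← Finset.sum_subset (Finset.subset_univ K)
          (by intro i _ hi; simp [w, hi]),
        ← Finset.sum_coe_sort K (fun i => w j i * pm (x i))]
      apply Finset.sum_congr rfl
      intro i _
      congr 1
      simp [w, i.2]
    have h2 : ∑ i : ↥K, pm (e j i) * pm (x i)
        = ∑ i : ↥K, (1 - (if x i = e j i then (0:ℝ) else 2)) := by
      apply Finset.sum_congr rfl; intro i _; exact pm_mul _ _
    have h3 : ∑ i : ↥K, (1 - (if x i = e j i then (0:ℝ) else 2))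
        = (p : ℝ) - 2 * ((univ.filter (fun i : ↥K => ¬ x i = e j i)).card : ℝ) := by
      rw [Finset.sum_sub_distrib]
      have hc : (Fintype.card ↥K : ℝ) = (p : ℝ) := by
        simp [Fintype.card_coe, hK]
      have h4 : ∑ i : ↥K, (if x i = e j i then (0:ℝ) else 2)
          = 2 * ((univ.filter (fun i : ↥K => ¬ x i = e j i)).card : ℝ) := by
        rw [Finset.sum_ite, Finset.sum_const, Finset.sum_const]
        simp [mul_comm]
      rw [h4]
      simp [hc, Finset.card_univ, hK]
    rw [h1, h2, h3]; ring
  -- the matching index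
  have hmatch : ∀ (j : Fin (2 ^ p)) (x : Fin n → Bool),
      (0 < ∑ i, w j i * pm (x i) - p + 1) ↔ j = e.symm (fun i : ↥K => x i) := by
    intro j x
    rw [hsum]
    constructor
    · intro h
      have hd : (univ.filter (fun i : ↥K => ¬ x i = e j i)).card = 0 := by
        by_contra hne
        have : 1 ≤ (univ.filter (fun i : ↥K => ¬ x i = e j i)).card := Nat.one_le_iff_ne_zero.mpr hne
        have : (1:ℝ) ≤ ((univ.filter (fun i : ↥K => ¬ x i = e j i)).card : ℝ) := by
          exact_mod_cast this
        linarith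
      have hall : ∀ i : ↥K, x i = e j i := by
        intro i
        by_contra hc
        have hmem : i ∈ univ.filter (fun i : ↥K => ¬ x i = e j i) := by simp [hc]
        rw [Finset.card_eq_zero] at hd
        rw [hd] at hmem
        exact absurd hmem (Finset.notMem_empty i)
      have : e j = fun i : ↥K => x i := funext fun i => (hall i).symm
      rw [← this]; simp
    · intro h
      subst h
      have : (univ.filter (fun i : ↥K => ¬ x i = e (e.symm fun i : ↥K => x i) i)).card = 0 := by
        rw [Finset.card_eq_zero]
        ext i; simp
      rw [this]; norm_num
  refine ⟨u, w, ?_, ?_, ?_, ?_⟩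
  · intro j
    rcases hval (x₀ j) with h | h <;> simp [u, h]
  · intro j
    have : ∑ i, w j i ^ 2 ≤ (p : ℝ) := by
      have : ∑ i, w j i ^ 2 = ∑ i : ↥K, pm (e j i) ^ 2 := by
        rw [← Finset.sum_subset (Finset.subset_univ K)
            (by intro i _ hi; simp [w, hi]),
          ← Finset.sum_coe_sort K (fun i => w j i ^ 2)]
        apply Finset.sum_congr rfl
        intro i _
        congr 1
        simp [w, i.2]
      rw [this]
      have hone : ∀ i : ↥K, pm (e j i) ^ 2 = 1 := by
        intro i; cases (e j i) <;> simp [pm]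
      simp only [hone, Finset.sum_const, Finset.card_univ, Fintype.card_coe, hK,
        nsmul_eq_mul, mul_one]
      exact le_refl _
    exact Real.sqrt_le_sqrt this
  · intro x
    have hmax : ∀ j, max (∑ i, w j i * pm (x i) - p + 1) 0
        = if j = e.symm (fun i : ↥K => x i) then (1:ℝ) else 0 := by
      intro j
      by_cases h : j = e.symm (fun i : ↥K => x i)
      · have hpos := (hmatch j x).mpr h
        subst h
        rw [hsum] at hpos ⊢
        have : (univ.filter (fun i : ↥K => ¬ x i = e (e.symm fun i : ↥K => x i) i)).card = 0 := by
          rw [Finset.card_eq_zero]; ext i; simp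
        rw [this]; norm_num
      · have hnpos : ¬ (0 < ∑ i, w j i * pm (x i) - p + 1) := fun hp => h ((hmatch j x).mp hp)
        push_neg at hnpos
        simp [h, max_eq_right hnpos]
    simp only [hmax, mul_ite, mul_one, mul_zero]
    rw [Finset.sum_ite_eq' univ (e.symm fun i : ↥K => x i) u]
    simp only [Finset.mem_univ, if_true]
    apply hjunta
    intro i hi
    have hiK : i ∈ K := hJK hi
    simp only [u, x₀, hiK, dif_pos]
    have : e (e.symm fun i : ↥K => x i) = fun i : ↥K => x i := e.apply_symm_apply _
    rw [this]
  · intro x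
    apply Finset.card_le_one.mpr
    intro a ha b hb
    simp only [Finset.mem_filter] at ha hb
    rw [(hmatch a x).mp ha.2, (hmatch b x).mp hb.2]
end

section
/- For integers m, and the embedding x : {-1,1}^m → {-1,1}^{m×m} defined by x(y)_{ii} = y_i and x(y)_{ij} = y_i y_j for i ≠ j: for every S ⊆ [m] and integer a ∈ [-m, m] restricted to S (precisely, for the sum over i ∈ S), there exist w ∈ ℝ^{m×m} and b ∈ ℝ such that for all y ∈ {-1,1}^m, 1/2 - (Σ_{i∈S} y_i - a)² = ⟨w, x(y)⟩ - b. One can take b = |S| + a² - 1/2, w[i,j] = -1 for distinct i,j ∈ S, w[i,i] = 2a for i ∈ S, and w zero elsewhere. -/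
open Finset

/-- The lifting `x(y) ∈ {-1,1}^{m×m}` with `x(y)_{ii} = y_i` and
`x(y)_{ij} = y_i y_j` for `i ≠ j`. -/
noncomputable def emb {m : ℕ} (y : Fin m → Bool) : Fin m × Fin m → ℝ :=
  fun q => if q.1 = q.2 then pm (y q.1) else pm (y q.1) * pm (y q.2)

/-- Linearization of the quadratic: for every `S ⊆ [m]` and integer `a ∈ [-m,m]`
there exist `w ∈ ℝ^{m×m}` and `b ∈ ℝ` such that for all `y ∈ {-1,1}^m`,
`1/2 - (Σ_{i∈S} y_i - a)² = ⟨w, x(y)⟩ - b`. -/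
theorem linearize_quadratic {m : ℕ} (S : Finset (Fin m)) (a : ℤ)
    (ha : -(m : ℤ) ≤ a ∧ a ≤ m) :
    ∃ (w : Fin m × Fin m → ℝ) (b : ℝ),
      ∀ y : Fin m → Bool,
        (1 : ℝ) / 2 - (∑ i ∈ S, pm (y i) - (a : ℝ)) ^ 2
          = (∑ q : Fin m × Fin m, w q * emb y q) - b := by
  refine ⟨fun q => if q.1 ∈ S ∧ q.2 ∈ S then (if q.1 = q.2 then 2*(a:ℝ) else -1) else 0,
    (S.card : ℝ) + (a:ℝ)^2 - 1/2, ?_⟩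
  intro y
  have hsq : ∀ i, pm (y i) * pm (y i) = 1 := by
    intro i; cases y i <;> simp [pm]
  set T := ∑ i ∈ S, pm (y i) with hT
  rw [Fintype.sum_prod_type]
  have h1 : (∑ i : Fin m, ∑ j : Fin m,
        (if i ∈ S ∧ j ∈ S then (if i = j then 2*(a:ℝ) else -1) else 0) * emb y (i,j))
      = ∑ i ∈ S, ∑ j ∈ S, (if i = j then 2*(a:ℝ) else -1) * emb y (i,j) := by
    rw [← Finset.sum_subset (Finset.subset_univ S)]
    · refine Finset.sum_congr rfl fun i hi => ?_
      rw [← Finset.sum_subset (Finset.subset_univ S)]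
      · exact Finset.sum_congr rfl fun j hj => by simp [hi, hj]
      · intro j _ hj; simp [hj]
    · intro i _ hi
      refine Finset.sum_eq_zero fun j _ => by simp [hi]
  rw [h1]
  have h2 : (∑ i ∈ S, ∑ j ∈ S, (if i = j then 2*(a:ℝ) else -1) * emb y (i,j))
      = -(T*T) + 2*(a:ℝ)*T + S.card := by
    have step : ∀ i ∈ S, (∑ j ∈ S, (if i = j then 2*(a:ℝ) else -1) * emb y (i,j))
        = (∑ j ∈ S, -(pm (y i) * pm (y j))) + (2*(a:ℝ)*pm (y i) + 1) := by
      intro i hi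
      have : ∀ j ∈ S, (if i = j then 2*(a:ℝ) else -1) * emb y (i,j)
          = -(pm (y i) * pm (y j))
            + (if j = i then 2*(a:ℝ)*pm (y i) + 1 else 0) := by
        intro j _
        by_cases h : i = j
        · subst h; simp [emb, hsq i]
        · simp [emb, h, Ne.symm h]
      rw [Finset.sum_congr rfl this, Finset.sum_add_distrib,
        Finset.sum_ite_eq' S i (fun _ => 2*(a:ℝ)*pm (y i) + 1), if_pos hi]
    rw [Finset.sum_congr rfl step, Finset.sum_add_distrib]
    have : (∑ i ∈ S, ∑ j ∈ S, -(pm (y i) * pm (y j))) = -(T*T) := by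
      rw [hT, Finset.sum_mul_sum]
      simp [Finset.sum_neg_distrib]
    rw [this, Finset.sum_add_distrib, ← Finset.mul_sum, ← hT]
    simp [Finset.sum_const]
    ring
  rw [h2]
  ring
end

section
/- Fix ρ ∈ (0,1) and let r = ⌊2/(1-ρ)⌋. Consider the following sampling procedure: sample z uniform on {-1,1}^n; assign each coordinate i ∈ [n] independently and uniformly to one of r buckets A_1,...,A_r; sample v ∈ {-1,1}^r uniform; define x by x_i = z_i·v_{e(i)} where e(i) is the bucket of i; pick b ∈ [r] uniform and define y by y_i = z_i·(v^{⊕b})_{e(i)}. Then the marginal of x is uniform on {-1,1}^n and, conditioned on x, each coordinate of y independently equals x_i with probability 1 - 1/r and -x_i with probability 1/r. In particular, for any f : {-1,1}^n → ℝ, E[(1/4)(f(x)-f(y))²] = NS_{1-2/r}(f). -/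
open Finset

/-- Noise sensitivity, as in the Peres argument. -/
noncomputable def noiseSens {n : ℕ} (ρ : ℝ) (f : (Fin n → Bool) → ℝ) : ℝ :=
  (∑ x : Fin n → Bool, ∑ e : Fin n → Bool,
      (∏ i, if e i then (1 - ρ) / 2 else (1 + ρ) / 2) *
        (1 / 4 * (f x - f (fun i => xor (e i) (x i))) ^ 2)) / 2 ^ n

/-- The coordinate-wise sign product `x_i = z_i · v_{e(i)}` in the `±1` encoding:
the result is `+1` (`true`) iff the two signs agree. -/
def sgnMul (a c : Bool) : Bool := !(xor a c)

private lemma bool1 (z w x y : Bool) :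
    (sgnMul z w = x ∧ sgnMul z (!w) = y) ↔ (z = sgnMul x w ∧ ¬ y = x) := by revert z w x y; decide

private lemma bool2 (z w x y : Bool) :
    (sgnMul z w = x ∧ sgnMul z w = y) ↔ (z = sgnMul x w ∧ y = x) := by revert z w x y; decide

lemma cond_iff {n r : ℕ} (x₀ y₀ z : Fin n → Bool) (e : Fin n → Fin r)
    (v : Fin r → Bool) (c : Fin r) :
    ((fun i => sgnMul (z i) (v (e i))) = x₀ ∧
      (fun i => sgnMul (z i) (Function.update v c (!(v c)) (e i))) = y₀)
    ↔ ((z = fun i => sgnMul (x₀ i) (v (e i))) ∧ ∀ i, (e i = c ↔ ¬ y₀ i = x₀ i)) := by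
  simp only [funext_iff]
  rw [← forall_and, ← forall_and]
  refine forall_congr' fun i => ?_
  by_cases h : e i = c
  · rw [h, Function.update_self]
    simpa [h] using bool1 (z i) (v c) (x₀ i) (y₀ i)
  · rw [Function.update_of_ne h]
    simpa [h] using bool2 (z i) (v (e i)) (x₀ i) (y₀ i)

private lemma ite_split (p q : Prop) [Decidable p] [Decidable q] :
    (if p ∧ q then (1:ℝ) else 0) = (if p then 1 else 0) * (if q then 1 else 0) := by
  by_cases hp : p <;> by_cases hq : q <;> simp [hp, hq]

private lemma sum_fin_ite {r : ℕ} (hr : 1 ≤ r) (c : Fin r) (P : Prop) [Decidable P] :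
    ∑ a : Fin r, (if (a = c ↔ P) then (1:ℝ) else 0) = if P then 1 else (r : ℝ) - 1 := by
  by_cases hP : P
  · simp only [hP, iff_true]
    rw [Finset.sum_ite_eq' Finset.univ c (fun _ => (1:ℝ))]
    simp
  · simp only [hP, iff_false]
    rw [Finset.sum_ite, Finset.sum_const, Finset.sum_const]
    have : Finset.filter (fun a : Fin r => ¬ a = c) Finset.univ = Finset.univ.erase c := by
      ext a; simp [Finset.mem_erase]
    rw [this, Finset.card_erase_of_mem (Finset.mem_univ _)]
    simp [hP, Nat.cast_sub hr]

lemma count_eq {n r : ℕ} (hr : 1 ≤ r) (x₀ y₀ : Fin n → Bool) :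
    (∑ z : Fin n → Bool, ∑ e : Fin n → Fin r, ∑ v : Fin r → Bool, ∑ c : Fin r,
        if (fun i => sgnMul (z i) (v (e i))) = x₀ ∧
            (fun i => sgnMul (z i) (Function.update v c (!(v c)) (e i))) = y₀
          then (1 : ℝ) else 0)
    = r * 2 ^ r * ∏ i, (if y₀ i = x₀ i then (r : ℝ) - 1 else 1) := by
  simp only [cond_iff, ite_split]
  -- pull the c-sum inside: term = A z e v * B e c
  have step1 : ∀ (z : Fin n → Bool) (e : Fin n → Fin r) (v : Fin r → Bool),
      ∑ c : Fin r, (if z = fun i => sgnMul (x₀ i) (v (e i)) then (1:ℝ) else 0) *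
        (if (∀ i, (e i = c ↔ ¬ y₀ i = x₀ i)) then 1 else 0)
      = (if z = fun i => sgnMul (x₀ i) (v (e i)) then (1:ℝ) else 0) *
        ∑ c : Fin r, (if (∀ i, (e i = c ↔ ¬ y₀ i = x₀ i)) then (1:ℝ) else 0) :=
    fun z e v => (Finset.mul_sum _ _ _).symm
  simp only [step1]
  rw [Finset.sum_comm]
  have step2 : ∀ e : Fin n → Fin r,
      ∑ z : Fin n → Bool, ∑ v : Fin r → Bool,
        (if z = fun i => sgnMul (x₀ i) (v (e i)) then (1:ℝ) else 0) *
        (∑ c : Fin r, (if (∀ i, (e i = c ↔ ¬ y₀ i = x₀ i)) then (1:ℝ) else 0))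
      = 2 ^ r * ∑ c : Fin r, (if (∀ i, (e i = c ↔ ¬ y₀ i = x₀ i)) then (1:ℝ) else 0) := by
    intro e
    rw [Finset.sum_comm]
    simp only [← Finset.sum_mul]
    congr 1
    have : ∀ v : Fin r → Bool,
        ∑ z : Fin n → Bool, (if z = fun i => sgnMul (x₀ i) (v (e i)) then (1:ℝ) else 0) = 1 := by
      intro v; rw [Finset.sum_ite_eq']; simp
    simp [this]
  simp only [step2]
  rw [← Finset.mul_sum, Finset.sum_comm]
  have step3 : ∀ c : Fin r,
      ∑ e : Fin n → Fin r, (if (∀ i, (e i = c ↔ ¬ y₀ i = x₀ i)) then (1:ℝ) else 0)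
      = ∏ i, (if y₀ i = x₀ i then (r : ℝ) - 1 else 1) := by
    intro c
    have ind : ∀ e : Fin n → Fin r,
        (if (∀ i, (e i = c ↔ ¬ y₀ i = x₀ i)) then (1:ℝ) else 0)
        = ∏ i, (if (e i = c ↔ ¬ y₀ i = x₀ i) then (1:ℝ) else 0) := by
      intro e
      by_cases h : ∀ i, (e i = c ↔ ¬ y₀ i = x₀ i)
      · simp [h]
      · rw [if_neg h]
        obtain ⟨i, hi⟩ := not_forall.mp h
        exact (Finset.prod_eq_zero (Finset.mem_univ i) (by rw [if_neg hi] : (if (e i = c ↔ ¬ y₀ i = x₀ i) then (1:ℝ) else 0) = 0)).symm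
    simp only [ind]
    rw [← Fintype.prod_sum (fun (i : Fin n) (a : Fin r) => if (a = c ↔ ¬ y₀ i = x₀ i) then (1:ℝ) else 0)]
    refine Finset.prod_congr rfl fun i _ => ?_
    rw [sum_fin_ite hr]
    by_cases h : y₀ i = x₀ i <;> simp [h]
  simp only [step3, Finset.sum_const]
  simp [mul_comm, mul_assoc, mul_left_comm]

/-- The bucket coupling of Peres' argument: sample `z` uniform on `{-1,1}^n`,
assign each coordinate to one of `r` buckets uniformly and independently, sample
`v ∈ {-1,1}^r` uniform; set `x_i = z_i v_{e(i)}`; pick a uniform bucket `b` and set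
`y_i = z_i (v^{⊕b})_{e(i)}`. Then the joint law of `(x,y)` is: `x` uniform and `y`
obtained from `x` by flipping each coordinate independently w.p. `1/r`; in
particular `E[(1/4)(f(x)-f(y))²] = NS_{1-2/r}(f)`. -/
theorem peres_coupling {n : ℕ} (ρ : ℝ) (hρ : ρ ∈ Set.Ioo (0 : ℝ) 1) (r : ℕ)
    (hr : r = ⌊2 / (1 - ρ)⌋₊) (f : (Fin n → Bool) → ℝ) :
    (∀ x₀ y₀ : Fin n → Bool,
      (∑ z : Fin n → Bool, ∑ e : Fin n → Fin r, ∑ v : Fin r → Bool, ∑ c : Fin r,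
          if (fun i => sgnMul (z i) (v (e i))) = x₀ ∧
              (fun i => sgnMul (z i) (Function.update v c (!(v c)) (e i))) = y₀
            then (1 : ℝ) else 0)
          / (2 ^ n * (r : ℝ) ^ n * 2 ^ r * r)
        = (1 / 2 ^ n) * ∏ i : Fin n,
            if y₀ i = x₀ i then 1 - 1 / (r : ℝ) else 1 / (r : ℝ)) ∧
    (∑ z : Fin n → Bool, ∑ e : Fin n → Fin r, ∑ v : Fin r → Bool, ∑ c : Fin r,
        1 / 4 * (f (fun i => sgnMul (z i) (v (e i)))
            - f (fun i => sgnMul (z i) (Function.update v c (!(v c)) (e i)))) ^ 2)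
        / (2 ^ n * (r : ℝ) ^ n * 2 ^ r * r)
      = noiseSens (1 - 2 / r) f := by
  obtain ⟨hρ0, hρ1⟩ := hρ
  have h1ρ : (0:ℝ) < 1 - ρ := by linarith
  have hr1 : 1 ≤ r := by
    rw [hr]
    refine Nat.le_floor ?_
    push_cast
    rw [le_div_iff₀ h1ρ]
    nlinarith
  have hrR : (r : ℝ) ≠ 0 := ne_of_gt (by exact_mod_cast Nat.lt_of_lt_of_le Nat.zero_lt_one hr1)
  have h2n : (2:ℝ) ^ n ≠ 0 := by positivity
  have h2r : (2:ℝ) ^ r ≠ 0 := by positivity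
  have hrn : ((r:ℝ)) ^ n ≠ 0 := pow_ne_zero _ hrR
  -- Part 1
  have h1 : ∀ x₀ y₀ : Fin n → Bool,
      (∑ z : Fin n → Bool, ∑ e : Fin n → Fin r, ∑ v : Fin r → Bool, ∑ c : Fin r,
          if (fun i => sgnMul (z i) (v (e i))) = x₀ ∧
              (fun i => sgnMul (z i) (Function.update v c (!(v c)) (e i))) = y₀
            then (1 : ℝ) else 0)
          / (2 ^ n * (r : ℝ) ^ n * 2 ^ r * r)
        = (1 / 2 ^ n) * ∏ i : Fin n,
            if y₀ i = x₀ i then 1 - 1 / (r : ℝ) else 1 / (r : ℝ) := by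
    intro x₀ y₀
    rw [count_eq hr1 x₀ y₀]
    have hprod : ∏ i : Fin n, (if y₀ i = x₀ i then (r : ℝ) - 1 else 1)
        = (r:ℝ) ^ n * ∏ i : Fin n, (if y₀ i = x₀ i then 1 - 1/(r:ℝ) else 1/(r:ℝ)) := by
      have hc : ((r:ℝ)) ^ n = ∏ _i : Fin n, (r:ℝ) := by simp
      rw [hc, ← Finset.prod_mul_distrib]
      refine Finset.prod_congr rfl fun i _ => ?_
      split_ifs <;> field_simp
    rw [hprod]
    field_simp
  refine ⟨h1, ?_⟩
  -- Part 2
  have delta : ∀ X Y : Fin n → Bool,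
      (1 / 4 * (f X - f Y) ^ 2 : ℝ)
      = ∑ p : (Fin n → Bool) × (Fin n → Bool),
          (1 / 4 * (f p.1 - f p.2) ^ 2) * (if X = p.1 ∧ Y = p.2 then (1:ℝ) else 0) := by
    intro X Y
    rw [Finset.sum_eq_single (X, Y)]
    · simp
    · intro p _ hp
      rw [if_neg, mul_zero]
      rintro ⟨a, b⟩
      exact hp (Prod.ext a.symm b.symm)
    · intro h; exact absurd (Finset.mem_univ _) h
  have expand :
      (∑ z : Fin n → Bool, ∑ e : Fin n → Fin r, ∑ v : Fin r → Bool, ∑ c : Fin r,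
        1 / 4 * (f (fun i => sgnMul (z i) (v (e i)))
            - f (fun i => sgnMul (z i) (Function.update v c (!(v c)) (e i)))) ^ 2)
      = ∑ p : (Fin n → Bool) × (Fin n → Bool),
          (1 / 4 * (f p.1 - f p.2) ^ 2) *
          (∑ z : Fin n → Bool, ∑ e : Fin n → Fin r, ∑ v : Fin r → Bool, ∑ c : Fin r,
            if (fun i => sgnMul (z i) (v (e i))) = p.1 ∧
                (fun i => sgnMul (z i) (Function.update v c (!(v c)) (e i))) = p.2
              then (1 : ℝ) else 0) := by
    have step : (∑ z : Fin n → Bool, ∑ e : Fin n → Fin r, ∑ v : Fin r → Bool, ∑ c : Fin r,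
        1 / 4 * (f (fun i => sgnMul (z i) (v (e i)))
            - f (fun i => sgnMul (z i) (Function.update v c (!(v c)) (e i)))) ^ 2)
      = ∑ z : Fin n → Bool, ∑ e : Fin n → Fin r, ∑ v : Fin r → Bool, ∑ c : Fin r,
          ∑ p : (Fin n → Bool) × (Fin n → Bool),
          (1 / 4 * (f p.1 - f p.2) ^ 2) *
          (if (fun i => sgnMul (z i) (v (e i))) = p.1 ∧
              (fun i => sgnMul (z i) (Function.update v c (!(v c)) (e i))) = p.2
            then (1 : ℝ) else 0) :=
      Finset.sum_congr rfl fun z _ => Finset.sum_congr rfl fun e _ =>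
        Finset.sum_congr rfl fun v _ => Finset.sum_congr rfl fun c _ => delta _ _
    rw [step]
    -- pull the p-sum out
    have hswap1 : ∀ (z : Fin n → Bool) (e : Fin n → Fin r) (v : Fin r → Bool)
        (F : Fin r → ((Fin n → Bool) × (Fin n → Bool)) → ℝ),
        ∑ c, ∑ p, F c p = ∑ p, ∑ c, F c p := fun _ _ _ _ => Finset.sum_comm
    have hswap2 : ∀ (F : (Fin r → Bool) → ((Fin n → Bool) × (Fin n → Bool)) → ℝ),
        ∑ v, ∑ p, F v p = ∑ p, ∑ v, F v p := fun _ => Finset.sum_comm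
    have hswap3 : ∀ (F : (Fin n → Fin r) → ((Fin n → Bool) × (Fin n → Bool)) → ℝ),
        ∑ e, ∑ p, F e p = ∑ p, ∑ e, F e p := fun _ => Finset.sum_comm
    have hswap4 : ∀ (F : (Fin n → Bool) → ((Fin n → Bool) × (Fin n → Bool)) → ℝ),
        ∑ z, ∑ p, F z p = ∑ p, ∑ z, F z p := fun _ => Finset.sum_comm
    rw [Finset.sum_congr rfl fun z _ => Finset.sum_congr rfl fun e _ =>
      Finset.sum_congr rfl fun v _ => hswap1 z e v _]
    rw [Finset.sum_congr rfl fun z _ => Finset.sum_congr rfl fun e _ => hswap2 _]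
    rw [Finset.sum_congr rfl fun z _ => hswap3 _]
    rw [hswap4 _]
    refine Finset.sum_congr rfl fun p _ => ?_
    simp only [← Finset.mul_sum]
  rw [expand, Finset.sum_div]
  simp only [mul_div_assoc]
  simp only [h1]
  -- now identify with noiseSens
  have reindex : ∀ x₀ : Fin n → Bool,
      ∑ e : Fin n → Bool,
        (∏ i, if e i then (1 - (1 - 2 / (r:ℝ))) / 2 else (1 + (1 - 2 / (r:ℝ))) / 2) *
          (1 / 4 * (f x₀ - f (fun i => xor (e i) (x₀ i))) ^ 2)
      = ∑ y₀ : Fin n → Bool,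
          (1 / 4 * (f x₀ - f y₀) ^ 2) *
            ∏ i : Fin n, (if y₀ i = x₀ i then 1 - 1 / (r : ℝ) else 1 / (r : ℝ)) := by
    intro x₀
    refine Fintype.sum_bijective (fun e : Fin n → Bool => fun i => xor (e i) (x₀ i))
      ?_ _ _ ?_
    · refine Function.Involutive.bijective ?_
      intro e; funext i; simp [Bool.xor_assoc]
    · intro e
      rw [mul_comm]
      congr 1
      refine Finset.prod_congr rfl fun i _ => ?_
      cases he : e i <;> cases hx : x₀ i <;> simp [he, hx] <;> ring
  have hns : noiseSens (1 - 2 / (r:ℝ)) f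
      = ∑ x₀ : Fin n → Bool, ∑ y₀ : Fin n → Bool,
          (1 / 4 * (f x₀ - f y₀) ^ 2) *
            ((1 / 2 ^ n) *
              ∏ i : Fin n, (if y₀ i = x₀ i then 1 - 1 / (r : ℝ) else 1 / (r : ℝ))) := by
    unfold noiseSens
    rw [Finset.sum_congr rfl fun x₀ _ => reindex x₀]
    rw [Finset.sum_div]
    refine Finset.sum_congr rfl fun x₀ _ => ?_
    rw [Finset.sum_div]
    refine Finset.sum_congr rfl fun y₀ _ => ?_
    rw [div_eq_mul_inv]
    ring
  rw [hns, Fintype.sum_prod_type]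
end
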